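/- On the domain D = {(x¹,x²,y¹,y²) ∈ ℝ⁴ : x¹ + y¹ ≠ 0, x² ≠ 0, y² ≠ 0}, consider Bol's web function f¹ = y²/(x¹ + y¹), f² = x²/(x¹ + y¹), and set σ = (x¹ + y¹)/y², τ = (x¹ + y¹)/x². Then the Jacobian matrices f̄ and f̃ are invertible on D, the connection coefficients are Γ¹₁₁ = Γ²₁₂ = −σ, Γ¹₁₂ = Γ²₂₂ = −τ, Γ¹₂₁ = Γ¹₂₂ = Γ²₁₁ = Γ²₂₁ = 0, and the curvature tensor vanishes identically: b^i_{jkl} = 0 for all i,j,k,l (so the web is a group web). -/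

import Mathlib

noncomputable section

/-- Points of ℝ⁴ with coordinates (x¹, x², y¹, y²). -/
abbrev Pt : Type := ℝ × ℝ × ℝ × ℝ

/-- Partial derivative with respect to x^j (j = 0 ↦ x¹, j = 1 ↦ x²). -/
def pdx (j : Fin 2) (F : Pt → ℝ) (p : Pt) : ℝ :=
  if j = 0 then deriv (fun t => F (t, p.2.1, p.2.2.1, p.2.2.2)) p.1
  else deriv (fun t => F (p.1, t, p.2.2.1, p.2.2.2)) p.2.1

/-- Partial derivative with respect to y^k (k = 0 ↦ y¹, k = 1 ↦ y²). -/
def pdy (k : Fin 2) (F : Pt → ℝ) (p : Pt) : ℝ :=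
  if k = 0 then deriv (fun t => F (p.1, p.2.1, t, p.2.2.2)) p.2.2.1
  else deriv (fun t => F (p.1, p.2.1, p.2.2.1, t)) p.2.2.2

/-- Jacobian matrix f̄ with entries f̄^i_j = ∂f^i/∂x^j. -/
def fbar (f : Fin 2 → Pt → ℝ) (p : Pt) : Matrix (Fin 2) (Fin 2) ℝ :=
  Matrix.of fun i j => pdx j (f i) p

/-- Jacobian matrix f̃ with entries f̃^i_k = ∂f^i/∂y^k. -/
def ftil (f : Fin 2 → Pt → ℝ) (p : Pt) : Matrix (Fin 2) (Fin 2) ℝ :=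
  Matrix.of fun i k => pdy k (f i) p

/-- Connection coefficients Γ^i_{jk} = −Σ_{l,m} (∂²f^i/∂x^l∂y^m) ḡ^l_j g̃^m_k,
where ḡ = f̄⁻¹ and g̃ = f̃⁻¹. -/
def Gam (f : Fin 2 → Pt → ℝ) (i j k : Fin 2) (p : Pt) : ℝ :=
  - ∑ l : Fin 2, ∑ m : Fin 2,
      pdy m (pdx l (f i)) p * (fbar f p)⁻¹ l j * (ftil f p)⁻¹ m k

/-- Torsion tensor a^i_{jk} = (Γ^i_{jk} − Γ^i_{kj})/2. -/
def tors (f : Fin 2 → Pt → ℝ) (i j k : Fin 2) (p : Pt) : ℝ :=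
  (Gam f i j k p - Gam f i k j p) / 2

/-- Curvature tensor b^i_{jkl}. -/
def curv (f : Fin 2 → Pt → ℝ) (i j k l : Fin 2) (p : Pt) : ℝ :=
  (1/2) * ∑ m : Fin 2,
    ( pdx m (Gam f i k l) p * (fbar f p)⁻¹ m j
    + pdx m (Gam f i j l) p * (fbar f p)⁻¹ m k
    - pdy m (Gam f i k j) p * (ftil f p)⁻¹ m l
    - pdy m (Gam f i k l) p * (ftil f p)⁻¹ m j
    + Gam f m j l p * Gam f i k m p
    - Gam f m k j p * Gam f i m l p
    + 2 * Gam f m k l p * tors f i m j p )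

/-- Bol's web function: f¹ = y²/(x¹ + y¹), f² = x²/(x¹ + y¹). -/
def w : Fin 2 → Pt → ℝ :=
  ![fun p => p.2.2.2 / (p.1 + p.2.2.1), fun p => p.2.1 / (p.1 + p.2.2.1)]

/-!
Write `s = x¹ + y¹`. The Jacobians of `w` have determinants `-y²/s³` and `x²/s³`, and the mixed
second derivatives of `w` are explicit, so `Γⁱ = -ḡᵀ Hⁱ g̃` (with `Hⁱ` the mixed Hessian of `wⁱ`)
comes out linear in `σ = s/y²` and `τ = s/x²`. Since `D` is open, `Γ` agrees with this closed form
near every point of `D`, so its partial derivatives are read off from those of `σ` and `τ`; the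
curvature then reduces to a rational identity in `s`, `x²`, `y²`.
-/

open Filter Topology

section

variable {𝕜 : Type*} [NontriviallyNormedField 𝕜]

/- No hypothesis `x ≠ 0` is needed: at `x = 0` both sides are junk `0`, since `u ↦ c / u ^ n`
is not differentiable there (or is constant) and division by zero gives `0`. -/
theorem deriv_const_div_pow (c x : 𝕜) (n : ℕ) :
    deriv (fun u => c / u ^ n) x = -(n * c) / x ^ (n + 1) := by
  have h : (fun u : 𝕜 => c / u ^ n) = fun u => c * u ^ (-(n : ℤ)) := by
    funext u; rw [zpow_neg, zpow_natCast, div_eq_mul_inv]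
  simp only [h, deriv_const_mul_field', deriv_zpow]
  rw [show -(n : ℤ) - 1 = -((n + 1 : ℕ) : ℤ) by push_cast; ring, zpow_neg, zpow_natCast]
  push_cast
  ring

theorem deriv_const_div_add_pow (c a x : 𝕜) (n : ℕ) :
    deriv (fun t => c / (a + t) ^ n) x = -(n * c) / (a + x) ^ (n + 1) := by
  rw [deriv_comp_const_add (fun u => c / u ^ n), deriv_const_div_pow]

end

lemma pdx_congr_of_eventuallyEq {F G : Pt → ℝ} {p : Pt} (h : F =ᶠ[𝓝 p] G) (j : Fin 2) :
    pdx j F p = pdx j G p := by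
  unfold pdx
  split_ifs
  · exact (h.comp_tendsto ((by fun_prop : Continuous
      fun t : ℝ => (t, p.2.1, p.2.2.1, p.2.2.2)).tendsto' _ _ rfl)).deriv_eq
  · exact (h.comp_tendsto ((by fun_prop : Continuous
      fun t : ℝ => (p.1, t, p.2.2.1, p.2.2.2)).tendsto' _ _ rfl)).deriv_eq

lemma pdy_congr_of_eventuallyEq {F G : Pt → ℝ} {p : Pt} (h : F =ᶠ[𝓝 p] G) (k : Fin 2) :
    pdy k F p = pdy k G p := by
  unfold pdy
  split_ifs
  · exact (h.comp_tendsto ((by fun_prop : Continuous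
      fun t : ℝ => (p.1, p.2.1, t, p.2.2.2)).tendsto' _ _ rfl)).deriv_eq
  · exact (h.comp_tendsto ((by fun_prop : Continuous
      fun t : ℝ => (p.1, p.2.1, p.2.2.1, t)).tendsto' _ _ rfl)).deriv_eq

open Matrix

def mixedHessian (F : Pt → ℝ) (p : Pt) : Matrix (Fin 2) (Fin 2) ℝ :=
  of fun l m => pdy m (pdx l F) p

lemma Gam_eq_neg_transpose_mul (f : Fin 2 → Pt → ℝ) (i j k : Fin 2) (p : Pt) :
    Gam f i j k p = -((fbar f p)⁻¹ᵀ * mixedHessian (f i) p * (ftil f p)⁻¹) j k := by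
  simp only [Gam, mixedHessian, mul_apply, transpose_apply, of_apply, Fin.sum_univ_two]
  ring

section

variable {x1 x2 y1 y2 : ℝ}

lemma fbar_w :
    fbar w (x1, x2, y1, y2) = !![-y2 / (x1 + y1) ^ 2, 0; -x2 / (x1 + y1) ^ 2, 1 / (x1 + y1)] := by
  ext i j
  fin_cases i <;> fin_cases j <;> simp [fbar, pdx, w, deriv_comp_add_const]

lemma ftil_w :
    ftil w (x1, x2, y1, y2) = !![-y2 / (x1 + y1) ^ 2, 1 / (x1 + y1); -x2 / (x1 + y1) ^ 2, 0] := by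
  ext i j
  fin_cases i <;> fin_cases j <;> simp [ftil, pdy, w, deriv_comp_const_add]

lemma mixedHessian_w (i : Fin 2) :
    mixedHessian (w i) (x1, x2, y1, y2) =
      ![!![2 * y2 / (x1 + y1) ^ 3, -1 / (x1 + y1) ^ 2; 0, 0],
        !![2 * x2 / (x1 + y1) ^ 3, 0; -1 / (x1 + y1) ^ 2, 0]] i := by
  ext l m
  fin_cases i <;> fin_cases l <;> fin_cases m <;>
    simp [mixedHessian, pdx, pdy, w, deriv_comp_add_const, deriv_comp_const_add,
      deriv_const_div_add_pow, neg_div]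

lemma fbar_w_mul (h1 : x1 + y1 ≠ 0) (h3 : y2 ≠ 0) :
    fbar w (x1, x2, y1, y2) * !![-(x1 + y1) ^ 2 / y2, 0; -x2 * (x1 + y1) / y2, x1 + y1] = 1 := by
  rw [fbar_w]
  ext i j
  fin_cases i <;> fin_cases j <;> simp [mul_apply, field]

lemma ftil_w_mul (h1 : x1 + y1 ≠ 0) (h2 : x2 ≠ 0) :
    ftil w (x1, x2, y1, y2) * !![0, -(x1 + y1) ^ 2 / x2; x1 + y1, -y2 * (x1 + y1) / x2] = 1 := by
  rw [ftil_w]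
  ext i j
  fin_cases i <;> fin_cases j <;> simp [mul_apply, field]

/-- The connection of Bol's web, `bolGam σ τ i j k = Γⁱ_jk`. Being linear in `(σ, τ)`, it also
describes each partial derivative of `Γ` in terms of those of `σ` and `τ`. -/
def bolGam (σ τ : ℝ) : Fin 2 → Matrix (Fin 2) (Fin 2) ℝ :=
  ![!![-σ, -τ; 0, 0], !![0, -σ; 0, -τ]]

lemma Gam_w (h1 : x1 + y1 ≠ 0) (h2 : x2 ≠ 0) (h3 : y2 ≠ 0) (i j k : Fin 2) :
    Gam w i j k (x1, x2, y1, y2) = bolGam ((x1 + y1) / y2) ((x1 + y1) / x2) i j k := by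
  rw [Gam_eq_neg_transpose_mul, inv_eq_right_inv (fbar_w_mul h1 h3),
    inv_eq_right_inv (ftil_w_mul h1 h2), mixedHessian_w]
  fin_cases i <;> fin_cases j <;> fin_cases k <;>
    simp [bolGam, mul_apply, field] <;> ring

lemma Gam_w_eventuallyEq (h1 : x1 + y1 ≠ 0) (h2 : x2 ≠ 0) (h3 : y2 ≠ 0) (i j k : Fin 2) :
    Gam w i j k =ᶠ[𝓝 (x1, x2, y1, y2)]
      fun q => bolGam ((q.1 + q.2.2.1) / q.2.2.2) ((q.1 + q.2.2.1) / q.2.1) i j k := by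
  have hD : ∀ᶠ q : Pt in 𝓝 (x1, x2, y1, y2), q.1 + q.2.2.1 ≠ 0 ∧ q.2.1 ≠ 0 ∧ q.2.2.2 ≠ 0 :=
    ((by fun_prop : Continuous fun q : Pt => q.1 + q.2.2.1).continuousAt.eventually_ne h1).and
      (((by fun_prop : Continuous fun q : Pt => q.2.1).continuousAt.eventually_ne h2).and
        ((by fun_prop : Continuous fun q : Pt => q.2.2.2).continuousAt.eventually_ne h3))
  filter_upwards [hD] with q ⟨hq1, hq2, hq3⟩ using Gam_w hq1 hq2 hq3 i j k

lemma pdx_Gam_w (h1 : x1 + y1 ≠ 0) (h2 : x2 ≠ 0) (h3 : y2 ≠ 0) (m i j k : Fin 2) :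
    pdx m (Gam w i j k) (x1, x2, y1, y2) =
      bolGam (![1 / y2, 0] m) (![1 / x2, -(x1 + y1) / x2 ^ 2] m) i j k := by
  rw [pdx_congr_of_eventuallyEq (Gam_w_eventuallyEq h1 h2 h3 i j k)]
  fin_cases m <;> fin_cases i <;> fin_cases j <;> fin_cases k <;> simp [pdx, bolGam]

lemma pdy_Gam_w (h1 : x1 + y1 ≠ 0) (h2 : x2 ≠ 0) (h3 : y2 ≠ 0) (m i j k : Fin 2) :
    pdy m (Gam w i j k) (x1, x2, y1, y2) =
      bolGam (![1 / y2, -(x1 + y1) / y2 ^ 2] m) (![1 / x2, 0] m) i j k := by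
  rw [pdy_congr_of_eventuallyEq (Gam_w_eventuallyEq h1 h2 h3 i j k)]
  fin_cases m <;> fin_cases i <;> fin_cases j <;> fin_cases k <;> simp [pdy, bolGam]

lemma curv_w (h1 : x1 + y1 ≠ 0) (h2 : x2 ≠ 0) (h3 : y2 ≠ 0) (i j k l : Fin 2) :
    curv w i j k l (x1, x2, y1, y2) = 0 := by
  fin_cases i <;> fin_cases j <;> fin_cases k <;> fin_cases l <;>
    simp [curv, tors, Fin.sum_univ_two, pdx_Gam_w h1 h2 h3, pdy_Gam_w h1 h2 h3, Gam_w h1 h2 h3,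
      inv_eq_right_inv (fbar_w_mul h1 h3), inv_eq_right_inv (ftil_w_mul h1 h2), bolGam, field]

end

theorem stmt_9 (x1 x2 y1 y2 : ℝ) (h1 : x1 + y1 ≠ 0) (h2 : x2 ≠ 0) (h3 : y2 ≠ 0) :
    IsUnit (fbar w (x1, x2, y1, y2)) ∧
    IsUnit (ftil w (x1, x2, y1, y2)) ∧
    Gam w 0 0 0 (x1, x2, y1, y2) = -((x1 + y1) / y2) ∧
    Gam w 1 0 1 (x1, x2, y1, y2) = -((x1 + y1) / y2) ∧
    Gam w 0 0 1 (x1, x2, y1, y2) = -((x1 + y1) / x2) ∧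
    Gam w 1 1 1 (x1, x2, y1, y2) = -((x1 + y1) / x2) ∧
    Gam w 0 1 0 (x1, x2, y1, y2) = 0 ∧
    Gam w 0 1 1 (x1, x2, y1, y2) = 0 ∧
    Gam w 1 0 0 (x1, x2, y1, y2) = 0 ∧
    Gam w 1 1 0 (x1, x2, y1, y2) = 0 ∧
    (∀ i j k l : Fin 2, curv w i j k l (x1, x2, y1, y2) = 0) := by
  refine ⟨(isUnit_iff_isUnit_det _).2 (isUnit_det_of_right_inverse (fbar_w_mul h1 h3)),
    (isUnit_iff_isUnit_det _).2 (isUnit_det_of_right_inverse (ftil_w_mul h1 h2)), ?_⟩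
  simp [Gam_w h1 h2 h3, bolGam, curv_w h1 h2 h3]
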